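/- Let z > 0 be real and n ≥ 0, k ≥ 1 be integers. Then the k-th derivative of ν ↦ J_ν(z) at ν = n equals k!·(z/2)^n · ∑_{m=0}^∞ [(−z²/4)^m/(m!·(m+n)!)] · ∑_{k₁=0}^{k} ([log(z/2)]^{k₁}/k₁!) · ∑_{k₂=0}^{k−k₁} (−1)^{k−k₁−k₂} · c_{k₂+1} · Ĥ_{m+n}^{(k−k₁−k₂)}. -/

import Mathlib

open scoped BigOperators

/-- The reciprocal of the complex Gamma function, an entire function
(Mathlib's `Complex.Gamma` vanishes at nonpositive integers, so the inverse is `0` there). -/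
noncomputable def Grec (t : ℂ) : ℂ := (Complex.Gamma t)⁻¹

/-- `G k t` is the `k`-th derivative of the reciprocal Gamma function at `t`. -/
noncomputable def G (k : ℕ) (t : ℂ) : ℂ := iteratedDeriv k Grec t

/-- The Maclaurin coefficients of `1/Γ`: `c j = G^{(j)}(0)/j!`. -/
noncomputable def mcCoeff (j : ℕ) : ℂ := iteratedDeriv j Grec 0 / (j.factorial : ℂ)

/-- Bessel function of the first kind `J_ν(z)` for real `z > 0` and complex order `ν`,
with `(z/2)^ν = exp (ν log (z/2))`. -/
noncomputable def besselJ (z : ℝ) (ν : ℂ) : ℂ :=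
  Complex.exp (ν * Complex.log ((z : ℂ) / 2)) *
    ∑' m : ℕ, (-(z : ℂ) ^ 2 / 4) ^ m / ((m.factorial : ℂ) * Complex.Gamma (ν + 1 + m))

/-- Pochhammer symbol `(t)_m = t (t+1) ⋯ (t+m-1)`. -/
noncomputable def poch (t : ℂ) (m : ℕ) : ℂ := ∏ i ∈ Finset.range m, (t + i)

/-- `P m k t = (1/k!) dᵏ/dtᵏ (t)_m`. -/
noncomputable def P (m k : ℕ) (t : ℂ) : ℂ :=
  ((k.factorial : ℂ))⁻¹ * iteratedDeriv k (fun s => poch s m) t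

/-- `Q m k t = (1/k!) dᵏ/dtᵏ (1/(t)_m)`. -/
noncomputable def Q (m k : ℕ) (t : ℂ) : ℂ :=
  ((k.factorial : ℂ))⁻¹ * iteratedDeriv k (fun s => (poch s m)⁻¹) t

/-- Signed Stirling numbers of the first kind: `s(n,k)` is the coefficient of `x^k`
in `x(x-1)⋯(x-n+1)`. -/
noncomputable def stirS (n k : ℕ) : ℤ := (descPochhammer ℤ n).coeff k

/-- Modified generalized harmonic numbers `Ĥ_m^{(k)}`. -/
noncomputable def Hhat (m k : ℕ) : ℝ :=
  if m = 0 then (if k = 0 then 1 else 0)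
  else ∑ j ∈ Finset.Icc 1 m, (-1 : ℝ) ^ (j - 1) * (m.choose j) / (j : ℝ) ^ k

/-- Digamma function `ψ = Γ'/Γ`. -/
noncomputable def digamma (t : ℂ) : ℂ := deriv Complex.Gamma t / Complex.Gamma t

/-!
Write `J_ν(z) = (z/2)^ν S(ν)` with `S(ν) = ∑ₘ (-z²/4)^m / m! · 1/Γ(ν+1+m)`. Since
`1/Γ(ν+1) = (ν+1)ₘ / Γ(ν+1+m)` and `|(ν+1)ₘ| ≥ m!/2^m` for `Re ν > -1/2`, the series converges
locally uniformly there, so it can be differentiated termwise, and Leibniz' rule splits off the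
derivatives `log(z/2)^{k₁} (z/2)^ν` of the first factor. At `ν = n` the `m`-th term needs the
derivatives of `1/Γ` at `N + 1` with `N = m + n`: there `1/Γ(t+N+1) = 1/Γ(t+1) · 1/(t+1)_N`, the
Maclaurin coefficients of `1/Γ(t+1)` are the `c_{j+1}`, and the partial fraction expansion
`1/(t+1)_N = (1/N!) ∑_{j=1}^N (-1)^{j-1} C(N,j) j/(t+j)` turns the derivatives of the second
factor at `0` into the numbers `Ĥ_N^{(b)}`.
-/

open Finset Filter Topology

section LocallyUniformLimit

variable {ι E : Type*} [NormedAddCommGroup E] [NormedSpace ℂ E] [CompleteSpace E]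
  {F : ι → ℂ → E} {U : Set ℂ}

theorem TendstoLocallyUniformlyOn.iteratedDeriv {φ : Filter ι} {f : ℂ → E}
    (hf : TendstoLocallyUniformlyOn F f φ U) (hF : ∀ᶠ i in φ, DifferentiableOn ℂ (F i) U)
    (hU : IsOpen U) (j : ℕ) :
    TendstoLocallyUniformlyOn (fun i => iteratedDeriv j (F i)) (iteratedDeriv j f) φ U := by
  induction j with
  | zero => simpa using hf
  | succ j ih =>
    simp only [iteratedDeriv_succ]
    refine ih.deriv (hF.mono fun i hi => ?_) hU
    rw [iteratedDeriv_eq_iterate]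
    exact ((hi.analyticOnNhd hU).iterated_deriv j).differentiableOn

theorem hasSum_iteratedDeriv_of_summable_norm {u : ι → ℝ} (hu : Summable u)
    (hF : ∀ i, DifferentiableOn ℂ (F i) U) (hU : IsOpen U)
    (hF_le : ∀ i, ∀ w ∈ U, ‖F i w‖ ≤ u i) {z : ℂ} (hz : z ∈ U) (j : ℕ) :
    HasSum (fun i => iteratedDeriv j (F i) z) (iteratedDeriv j (fun w => ∑' i, F i w) z) := by
  have hc := (tendstoUniformlyOn_tsum hu hF_le).tendstoLocallyUniformlyOn.iteratedDeriv
    (Eventually.of_forall fun s => DifferentiableOn.fun_sum fun i _ => hF i) hU j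
  refine (hc.tendsto_at hz).congr fun s => ?_
  exact iteratedDeriv_fun_sum fun i _ => ((hF i).analyticAt (hU.mem_nhds hz)).contDiffAt

end LocallyUniformLimit

lemma iteratedDeriv_inv_add_const {𝕜 : Type*} [NontriviallyNormedField 𝕜] (b : ℕ) (d x : 𝕜) :
    iteratedDeriv b (fun t => (t + d)⁻¹) x = (-1) ^ b * b.factorial * ((x + d) ^ (b + 1))⁻¹ := by
  rw [iteratedDeriv_comp_add_const b Inv.inv d]
  dsimp only
  rw [iteratedDeriv_eq_iterate, iter_deriv_inv,
    show (-1 - b : ℤ) = -((b + 1 : ℕ) : ℤ) by push_cast; ring, zpow_neg, zpow_natCast]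

lemma differentiable_Grec : Differentiable ℂ Grec := Complex.differentiable_one_div_Gamma

lemma Grec_eq_mul_Grec_add_one (s : ℂ) : Grec s = s * Grec (s + 1) := by
  rcases eq_or_ne s 0 with rfl | hs
  · simp [Grec]
  · rw [Grec, Grec, Complex.Gamma_add_one s hs, mul_inv, ← mul_assoc, mul_inv_cancel₀ hs, one_mul]

lemma Grec_eq_poch_mul (s : ℂ) (N : ℕ) : Grec s = poch s N * Grec (s + N) := by
  induction N with
  | zero => simp [poch]
  | succ N ih =>
    rw [ih, Grec_eq_mul_Grec_add_one (s + N)]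
    simp only [poch, prod_range_succ]
    push_cast
    ring_nf

lemma iteratedDeriv_Grec_comp_add_one_zero (a : ℕ) :
    iteratedDeriv a (fun t => Grec (t + 1)) 0 = a.factorial * mcCoeff (a + 1) := by
  have h : iteratedDeriv (a + 1) Grec 0 =
      (a + 1) * iteratedDeriv a (fun t => Grec (t + 1)) 0 := by
    conv_lhs => rw [show Grec = fun t => t * Grec (t + 1) from funext Grec_eq_mul_Grec_add_one]
    rw [iteratedDeriv_fun_mul (f := fun t => t) (g := fun t => Grec (t + 1))
      contDiff_id.contDiffAt
      (differentiable_Grec.comp (differentiable_id.add_const 1)).contDiff.contDiffAt]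
    simp [iteratedDeriv_fun_id_zero]
  rw [mcCoeff, h, Nat.factorial_succ, Nat.cast_mul, Nat.cast_succ,
    mul_div_mul_left _ _ (Nat.cast_add_one_ne_zero a),
    mul_div_cancel₀ _ (Nat.cast_ne_zero.mpr a.factorial_ne_zero)]

noncomputable def partialFractionCoeff (N i : ℕ) : ℂ :=
  (-1) ^ i / (i.factorial * (N - 1 - i).factorial)

lemma partialFractionCoeff_div_sub {N i : ℕ} (hi : i < N) :
    partialFractionCoeff N i / (N - i) = partialFractionCoeff (N + 1) i := by
  obtain ⟨r, rfl⟩ := Nat.exists_eq_add_of_lt hi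
  simp only [partialFractionCoeff, show i + r + 1 - 1 - i = r by omega,
    show i + r + 1 + 1 - 1 - i = r + 1 by omega, Nat.factorial_succ]
  push_cast
  rw [show (i : ℂ) + r + 1 - i = r + 1 by ring]
  field_simp

lemma partialFractionCoeff_succ_eq {N i : ℕ} (hi : i ≤ N) :
    partialFractionCoeff (N + 1) i = (-1) ^ i * N.choose i / N.factorial := by
  have := Nat.cast_ne_zero (R := ℂ).mpr N.factorial_ne_zero
  rw [partialFractionCoeff, Nat.cast_choose ℂ hi, Nat.add_sub_cancel]
  field_simp

lemma sum_partialFractionCoeff {N : ℕ} (hN : N ≠ 0) :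
    ∑ i ∈ range (N + 1), partialFractionCoeff (N + 1) i = 0 := by
  have h := congrArg (Int.cast : ℤ → ℂ) (Int.alternating_sum_range_choose_of_ne hN)
  push_cast at h
  rw [sum_congr rfl fun i hi => partialFractionCoeff_succ_eq (Nat.lt_succ_iff.mp (mem_range.mp hi)),
    ← sum_div, h, zero_div]

lemma inv_poch_eq_sum_partialFraction {N : ℕ} (hN : N ≠ 0) {t : ℂ} (ht : ∀ i < N, t + i ≠ 0) :
    (poch t N)⁻¹ = ∑ i ∈ range N, partialFractionCoeff N i * (t + i)⁻¹ := by
  induction N with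
  | zero => exact absurd rfl hN
  | succ N ih =>
    rcases eq_or_ne N 0 with rfl | hN0
    · simp [poch, partialFractionCoeff]
    have htN : t + N ≠ 0 := ht N N.lt_succ_self
    have hsplit : ∀ i ∈ range N, partialFractionCoeff N i * (t + i)⁻¹ * (t + N)⁻¹ =
        partialFractionCoeff (N + 1) i * (t + i)⁻¹ -
          partialFractionCoeff (N + 1) i * (t + N)⁻¹ := by
      intro i hi
      have hi := mem_range.mp hi
      have hti : t + i ≠ 0 := ht i (by omega)
      have hNi : (N : ℂ) - i ≠ 0 := by
        rw [← Nat.cast_sub hi.le]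
        exact Nat.cast_ne_zero.mpr (by omega)
      rw [← partialFractionCoeff_div_sub hi]
      field_simp
      ring
    have hlast := sum_partialFractionCoeff hN0
    rw [sum_range_succ] at hlast
    rw [poch, prod_range_succ, mul_inv, ← poch, ih hN0 fun i hi => ht i (by omega), sum_mul,
      sum_congr rfl hsplit, sum_sub_distrib, ← sum_mul, sum_range_succ]
    linear_combination -(t + N)⁻¹ * hlast

lemma sum_partialFractionCoeff_div_pow {N : ℕ} (hN : N ≠ 0) (b : ℕ) :
    ∑ i ∈ range N, partialFractionCoeff N i / ((i : ℂ) + 1) ^ (b + 1) =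
      Hhat N b / N.factorial := by
  obtain ⟨M, rfl⟩ := Nat.exists_eq_succ_of_ne_zero hN
  rw [Hhat, if_neg hN, ← Ico_add_one_right_eq_Icc, sum_Ico_eq_sum_range]
  push_cast
  rw [sum_div]
  refine sum_congr rfl fun i hi => ?_
  have hi := mem_range.mp hi
  have hchoose : ((M + 1 : ℕ) : ℂ) * M.choose i = (M + 1).choose (i + 1) * (i + 1 : ℕ) := by
    exact_mod_cast Nat.add_one_mul_choose_eq M i
  have := Nat.cast_ne_zero (R := ℂ).mpr M.factorial_ne_zero
  rw [partialFractionCoeff_succ_eq (by omega : i ≤ M), Nat.add_sub_cancel_left, add_comm 1 i,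
    add_comm 1 (i : ℂ), Nat.succ_eq_add_one, Nat.factorial_succ]
  push_cast at hchoose ⊢
  field_simp
  linear_combination (i + 1 : ℂ) ^ b * hchoose

lemma add_one_add_natCast_ne_zero {t : ℂ} (ht : -1 < t.re) (i : ℕ) : t + 1 + i ≠ 0 := by
  intro h
  have := congrArg Complex.re h
  simp only [Complex.add_re, Complex.one_re, Complex.natCast_re, Complex.zero_re] at this
  linarith [(Nat.cast_nonneg i : (0 : ℝ) ≤ i)]

lemma poch_add_one_ne_zero {t : ℂ} (ht : -1 < t.re) (N : ℕ) : poch (t + 1) N ≠ 0 :=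
  prod_ne_zero_iff.mpr fun i _ => add_one_add_natCast_ne_zero ht i

lemma eventually_neg_one_lt_re : ∀ᶠ t : ℂ in 𝓝 0, -1 < t.re :=
  (Complex.continuous_re.tendsto 0).eventually (lt_mem_nhds (by simp))

lemma iteratedDeriv_inv_poch_add_one_zero (N b : ℕ) :
    iteratedDeriv b (fun t => (poch (t + 1) N)⁻¹) 0 =
      (-1) ^ b * b.factorial * Hhat N b / N.factorial := by
  rcases eq_or_ne N 0 with rfl | hN
  · rcases b with _ | b <;> simp [poch, Hhat, iteratedDeriv_const]
  have hpf : (fun t => (poch (t + 1) N)⁻¹) =ᶠ[𝓝 0]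
      fun t => ∑ i ∈ range N, partialFractionCoeff N i * (t + (1 + (i : ℂ)))⁻¹ := by
    filter_upwards [eventually_neg_one_lt_re] with t ht
    simp_rw [← add_assoc]
    exact inv_poch_eq_sum_partialFraction hN fun i _ => add_one_add_natCast_ne_zero ht i
  have hterm : ∀ i ∈ range N,
      ContDiffAt ℂ b (fun t => partialFractionCoeff N i * (t + (1 + (i : ℂ)))⁻¹) 0 := by
    intro i _
    refine contDiffAt_const.mul ((contDiffAt_id.add contDiffAt_const).inv ?_)
    simpa [add_assoc] using add_one_add_natCast_ne_zero (t := 0) (by simp) i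
  rw [hpf.iteratedDeriv_eq, iteratedDeriv_fun_sum hterm]
  simp only [iteratedDeriv_const_mul_field, iteratedDeriv_inv_add_const, zero_add]
  rw [mul_div_assoc, ← sum_partialFractionCoeff_div_pow hN, mul_sum]
  refine sum_congr rfl fun i _ => ?_
  rw [add_comm (1 : ℂ)]
  ring

lemma iteratedDeriv_Grec_natCast_add_one (N j : ℕ) :
    iteratedDeriv j Grec (N + 1) = j.factorial / N.factorial *
      ∑ a ∈ range (j + 1), (-1) ^ (j - a) * mcCoeff (a + 1) * Hhat N (j - a) := by
  have hsplit : (fun t => Grec (t + (N + 1))) =ᶠ[𝓝 0]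
      fun t => Grec (t + 1) * (poch (t + 1) N)⁻¹ := by
    filter_upwards [eventually_neg_one_lt_re] with t ht
    rw [Grec_eq_poch_mul (t + 1) N, mul_comm, ← mul_assoc,
      inv_mul_cancel₀ (poch_add_one_ne_zero ht N), one_mul, add_right_comm, add_assoc]
  have hGrec : ContDiffAt ℂ j (fun t => Grec (t + 1)) 0 :=
    (differentiable_Grec.comp (differentiable_id.add_const 1)).contDiff.contDiffAt
  have hpoch : ContDiffAt ℂ j (fun t => (poch (t + 1) N)⁻¹) 0 := by
    refine ContDiffAt.inv ?_ (poch_add_one_ne_zero (by simp) N)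
    unfold poch
    fun_prop
  have hshift := congrFun (iteratedDeriv_comp_add_const j Grec ((N : ℂ) + 1)) 0
  rw [zero_add] at hshift
  rw [← hshift, hsplit.iteratedDeriv_eq, iteratedDeriv_fun_mul hGrec hpoch, mul_sum]
  refine sum_congr rfl fun a ha => ?_
  have hfac : ((j.choose a : ℕ) : ℂ) * a.factorial * (j - a).factorial = j.factorial := by
    exact_mod_cast Nat.choose_mul_factorial_mul_factorial (Nat.lt_succ_iff.mp (mem_range.mp ha))
  rw [iteratedDeriv_Grec_comp_add_one_zero, iteratedDeriv_inv_poch_add_one_zero, ← hfac]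
  ring

lemma factorial_div_two_pow_le_norm_poch {ν : ℂ} (hν : -1 / 2 < ν.re) (m : ℕ) :
    m.factorial / 2 ^ m ≤ ‖poch (ν + 1) m‖ := by
  have hfac : (m.factorial : ℝ) / 2 ^ m = ∏ i ∈ range m, ((i : ℝ) + 1) / 2 := by
    rw [prod_div_distrib, prod_const, card_range, ← prod_range_add_one_eq_factorial]
    push_cast
    rfl
  rw [hfac, poch, norm_prod]
  refine prod_le_prod (fun i _ => by positivity) fun i _ => ?_
  calc ((i : ℝ) + 1) / 2 ≤ (ν + 1 + i).re := by
        simp only [Complex.add_re, Complex.one_re, Complex.natCast_re]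
        linarith [(Nat.cast_nonneg i : (0 : ℝ) ≤ i)]
    _ ≤ ‖ν + 1 + i‖ := Complex.re_le_norm _

lemma norm_Grec_add_natCast_le {ν : ℂ} (hν : -1 / 2 < ν.re) (m : ℕ) :
    ‖Grec (ν + 1 + m)‖ ≤ 2 ^ m / m.factorial * ‖Grec (ν + 1)‖ := by
  have h : m.factorial / 2 ^ m * ‖Grec (ν + 1 + m)‖ ≤ ‖Grec (ν + 1)‖ := by
    rw [Grec_eq_poch_mul (ν + 1) m, norm_mul]
    exact mul_le_mul_of_nonneg_right (factorial_div_two_pow_le_norm_poch hν m) (norm_nonneg _)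
  calc ‖Grec (ν + 1 + m)‖
      = 2 ^ m / m.factorial * (m.factorial / 2 ^ m * ‖Grec (ν + 1 + m)‖) := by field_simp
    _ ≤ 2 ^ m / m.factorial * ‖Grec (ν + 1)‖ := by gcongr

noncomputable def besselSeries (w ν : ℂ) : ℂ := ∑' m : ℕ, w ^ m / m.factorial * Grec (ν + 1 + m)

lemma exists_summable_bound_besselSeries (w : ℂ) {ν : ℂ} (hν : -1 / 2 < ν.re) :
    ∃ U : Set ℂ, IsOpen U ∧ ν ∈ U ∧ ∃ u : ℕ → ℝ, Summable u ∧
      ∀ m : ℕ, ∀ μ ∈ U, ‖w ^ m / m.factorial * Grec (μ + 1 + m)‖ ≤ u m := by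
  obtain ⟨C, hC⟩ := (isCompact_closedBall (0 : ℂ) (‖ν‖ + 1)).exists_bound_of_continuousOn
    (differentiable_Grec.comp (differentiable_id.add_const 1)).continuous.continuousOn
  refine ⟨Metric.ball 0 (‖ν‖ + 1) ∩ {μ | -1 / 2 < μ.re},
    Metric.isOpen_ball.inter (isOpen_lt continuous_const Complex.continuous_re),
    ⟨by simp, hν⟩, fun m => C * ((2 * ‖w‖) ^ m / m.factorial),
    (Real.summable_pow_div_factorial _).mul_left C, fun m μ hμ => ?_⟩
  have hCμ := hC μ (Metric.ball_subset_closedBall hμ.1)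
  have hfac : (1 : ℝ) ≤ m.factorial := by exact_mod_cast m.factorial_pos
  calc ‖w ^ m / m.factorial * Grec (μ + 1 + m)‖
      ≤ ‖w‖ ^ m / m.factorial * (2 ^ m / m.factorial * C) := by
        rw [norm_mul, norm_div, norm_pow, Complex.norm_natCast]
        gcongr
        exact (norm_Grec_add_natCast_le hμ.2 m).trans (by gcongr; exact hCμ)
    _ = C * ((2 * ‖w‖) ^ m / m.factorial) * (m.factorial : ℝ)⁻¹ := by ring
    _ ≤ C * ((2 * ‖w‖) ^ m / m.factorial) :=
        mul_le_of_le_one_right (by have := (norm_nonneg _).trans hCμ; positivity)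
          (inv_le_one_of_one_le₀ hfac)

lemma differentiable_besselSeries_term (w : ℂ) (m : ℕ) :
    Differentiable ℂ fun μ => w ^ m / m.factorial * Grec (μ + 1 + m) :=
  ((differentiable_Grec.comp ((differentiable_id.add_const 1).add_const _))).const_mul _

lemma analyticAt_besselSeries (w : ℂ) {ν : ℂ} (hν : -1 / 2 < ν.re) :
    AnalyticAt ℂ (besselSeries w) ν := by
  obtain ⟨U, hU, hνU, u, hu, hle⟩ := exists_summable_bound_besselSeries w hν
  exact (Complex.differentiableOn_tsum_of_summable_norm hu
    (fun m => (differentiable_besselSeries_term w m).differentiableOn) hU hle).analyticAt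
    (hU.mem_nhds hνU)

lemma hasSum_iteratedDeriv_besselSeries (w : ℂ) {ν : ℂ} (hν : -1 / 2 < ν.re) (j : ℕ) :
    HasSum (fun m : ℕ => w ^ m / m.factorial * iteratedDeriv j Grec (ν + 1 + m))
      (iteratedDeriv j (besselSeries w) ν) := by
  obtain ⟨U, hU, hνU, u, hu, hle⟩ := exists_summable_bound_besselSeries w hν
  refine (hasSum_iteratedDeriv_of_summable_norm hu
    (fun m => (differentiable_besselSeries_term w m).differentiableOn) hU hle hνU j).congr_fun
    fun m => ?_
  rw [iteratedDeriv_const_mul_field]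
  simp_rw [add_assoc]
  rw [iteratedDeriv_comp_add_const]

lemma neg_half_lt_natCast_re (n : ℕ) : -1 / 2 < (n : ℂ).re := by
  rw [Complex.natCast_re]
  linarith [(Nat.cast_nonneg n : (0 : ℝ) ≤ n)]

lemma hasSum_iteratedDeriv_besselSeries_natCast (w : ℂ) (n j : ℕ) :
    HasSum (fun m : ℕ => w ^ m / (m.factorial * (m + n).factorial) *
        ∑ a ∈ range (j + 1), (-1) ^ (j - a) * mcCoeff (a + 1) * Hhat (m + n) (j - a))
      (iteratedDeriv j (besselSeries w) n / j.factorial) := by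
  refine ((hasSum_iteratedDeriv_besselSeries w (neg_half_lt_natCast_re n) j).div_const _).congr_fun
    fun m => ?_
  rw [show (n : ℂ) + 1 + m = ((m + n : ℕ) : ℂ) + 1 by push_cast; ring,
    iteratedDeriv_Grec_natCast_add_one]
  have := Nat.cast_ne_zero (R := ℂ).mpr j.factorial_ne_zero
  field_simp

lemma besselJ_eq_exp_mul_besselSeries (z : ℝ) (ν : ℂ) :
    besselJ z ν =
      Complex.exp (Complex.log ((z : ℂ) / 2) * ν) * besselSeries (-(z : ℂ) ^ 2 / 4) ν := by
  rw [besselJ, besselSeries, mul_comm ν]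
  congr 1
  refine tsum_congr fun m => ?_
  simp only [Grec, div_eq_mul_inv, mul_inv]
  ring

lemma iteratedDeriv_besselJ_eq_sum (z : ℝ) {ν : ℂ} (hν : -1 / 2 < ν.re) (k : ℕ) :
    iteratedDeriv k (fun ν => besselJ z ν) ν = ∑ k1 ∈ range (k + 1),
      k.choose k1 *
        (Complex.log ((z : ℂ) / 2) ^ k1 * Complex.exp (Complex.log ((z : ℂ) / 2) * ν)) *
        iteratedDeriv (k - k1) (besselSeries (-(z : ℂ) ^ 2 / 4)) ν := by
  simp_rw [besselJ_eq_exp_mul_besselSeries]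
  rw [iteratedDeriv_fun_mul (f := fun ν => Complex.exp (Complex.log ((z : ℂ) / 2) * ν))
    (Complex.differentiable_exp.comp (differentiable_id.const_mul _)).contDiff.contDiffAt
    (analyticAt_besselSeries _ hν).contDiffAt]
  simp only [iteratedDeriv_cexp_const_mul]

theorem iteratedDeriv_besselJ_nat_general (z : ℝ) (n k : ℕ) :
    iteratedDeriv k (fun ν => besselJ z ν) (n : ℂ) =
      (k.factorial : ℂ) * Complex.exp ((n : ℂ) * Complex.log ((z : ℂ) / 2)) *
        ∑' m : ℕ, ((-(z : ℂ) ^ 2 / 4) ^ m / ((m.factorial : ℂ) * ((m + n).factorial : ℂ)) *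
          ∑ k1 ∈ Finset.range (k + 1),
            (Complex.log ((z : ℂ) / 2)) ^ k1 / (k1.factorial : ℂ) *
              ∑ k2 ∈ Finset.range (k - k1 + 1),
                (-1) ^ (k - k1 - k2) * mcCoeff (k2 + 1) *
                  ((Hhat (m + n) (k - k1 - k2) : ℝ) : ℂ)) := by
  rw [iteratedDeriv_besselJ_eq_sum z (neg_half_lt_natCast_re n)]
  set L := Complex.log ((z : ℂ) / 2)
  set w : ℂ := -(z : ℂ) ^ 2 / 4
  have hseries := hasSum_sum fun k1 (_ : k1 ∈ range (k + 1)) =>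
    (hasSum_iteratedDeriv_besselSeries_natCast w n (k - k1)).mul_left (L ^ k1 / k1.factorial)
  rw [tsum_congr fun m => (mul_sum _ _ _).trans (sum_congr rfl fun k1 _ => mul_left_comm _ _ _),
    hseries.tsum_eq, mul_sum]
  refine sum_congr rfl fun k1 hk1 => ?_
  have hfac : ((k.choose k1 : ℕ) : ℂ) * k1.factorial * (k - k1).factorial = k.factorial := by
    exact_mod_cast Nat.choose_mul_factorial_mul_factorial (Nat.lt_succ_iff.mp (mem_range.mp hk1))
  have h1 := Nat.cast_ne_zero (R := ℂ).mpr k1.factorial_ne_zero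
  have h2 := Nat.cast_ne_zero (R := ℂ).mpr (k - k1).factorial_ne_zero
  rw [← hfac, mul_comm L]
  field_simp

/-- For `z > 0`, integer `n ≥ 0` and `k ≥ 1`:
`∂ᵏ/∂νᵏ J_ν(z)|_{ν=n} = k! (z/2)ⁿ ∑ₘ (−z²/4)ᵐ/(m!(m+n)!)
∑_{k₁=0}^{k} [log(z/2)]^{k₁}/k₁! ∑_{k₂=0}^{k−k₁} (−1)^{k−k₁−k₂} c_{k₂+1} Ĥ_{m+n}^{(k−k₁−k₂)}`. -/
theorem iteratedDeriv_besselJ_nat (z : ℝ) (hz : 0 < z) (n k : ℕ) (hk : 1 ≤ k) :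
    iteratedDeriv k (fun ν => besselJ z ν) (n : ℂ) =
      (k.factorial : ℂ) * Complex.exp ((n : ℂ) * Complex.log ((z : ℂ) / 2)) *
        ∑' m : ℕ, ((-(z : ℂ) ^ 2 / 4) ^ m / ((m.factorial : ℂ) * ((m + n).factorial : ℂ)) *
          ∑ k1 ∈ Finset.range (k + 1),
            (Complex.log ((z : ℂ) / 2)) ^ k1 / (k1.factorial : ℂ) *
              ∑ k2 ∈ Finset.range (k - k1 + 1),
                (-1) ^ (k - k1 - k2) * mcCoeff (k2 + 1) *
                  ((Hhat (m + n) (k - k1 - k2) : ℝ) : ℂ)) :=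
  iteratedDeriv_besselJ_nat_general z n k
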